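/- arXiv:2003.13255 — 2 statements merged into one kernel-verified Lean document; each statement's English description precedes it below -/
import Mathlib

section
/- Water-filling optimality for the total received power maximization (TRPM) problem: Let K be a finite nonempty index set of sensors, with parameters a_k > 0, b_k > 0, channel eigenvalues λ_k > 0, per-band power caps m_k > 0 for each k ∈ K, and a power budget E > 0. Let h ∈ ℝ and define p*_k = min(max(h·a_k − 1/(b_k·λ_k), 0), m_k) for each k ∈ K, and assume ∑_{k∈K} p*_k = E. Then for every allocation p : K → ℝ satisfying 0 ≤ p_k ≤ m_k for all k and ∑_{k∈K} p_k ≤ E, one has ∑_{k∈K} a_k·log(1 + b_k·λ_k·p_k) ≤ ∑_{k∈K} a_k·log(1 + b_k·λ_k·p*_k). -/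
/-!
With `ν = 1 / h` and `c_k = b_k λ_k`, each `p*_k` maximizes the Lagrangian
`a_k log (1 + c_k x) - ν x` over `[0, m_k]`: by concavity it suffices that the marginal
`a_k c_k / (1 + c_k p*_k)` is `≤ ν` where `p*_k = 0`, `≥ ν` where `p*_k = m_k`, and `= ν` in
between, which is what clamping the stationary point `h a_k - 1 / c_k` says. Summing over `k` and
using `∑ p_k ≤ E = ∑ p*_k` gives the claim; `h > 0` because otherwise `p* = 0`, contradicting
`E > 0`.
-/

open Finset Real

theorem Finset.sum_le_sum_of_lagrangian_le {ι : Type*} {s : Finset ι} {f : ι → ℝ → ℝ}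
    {x y : ι → ℝ} {ν : ℝ} (hν : 0 ≤ ν) (hxy : ∑ i ∈ s, x i ≤ ∑ i ∈ s, y i)
    (hf : ∀ i ∈ s, f i (x i) - ν * x i ≤ f i (y i) - ν * y i) :
    ∑ i ∈ s, f i (x i) ≤ ∑ i ∈ s, f i (y i) :=
  calc ∑ i ∈ s, f i (x i)
      ≤ ∑ i ∈ s, (f i (y i) + ν * (x i - y i)) :=
        sum_le_sum fun i hi => by linarith [hf i hi]
    _ = ∑ i ∈ s, f i (y i) + ν * (∑ i ∈ s, x i - ∑ i ∈ s, y i) := by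
        rw [sum_add_distrib, ← mul_sum, sum_sub_distrib]
    _ ≤ ∑ i ∈ s, f i (y i) :=
        add_le_of_nonpos_right (mul_nonpos_of_nonneg_of_nonpos hν (by linarith))

theorem Real.log_one_add_mul_le_tangent {c x y : ℝ} (hx : 0 < 1 + c * x) (hy : 0 < 1 + c * y) :
    log (1 + c * y) ≤ log (1 + c * x) + c / (1 + c * x) * (y - x) := by
  have hratio := log_le_sub_one_of_pos (div_pos hy hx)
  rw [log_div hy.ne' hx.ne'] at hratio
  have hslope : (1 + c * y) / (1 + c * x) - 1 = c / (1 + c * x) * (y - x) := by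
    field_simp
    ring
  linarith

noncomputable def waterFill (h a c m : ℝ) : ℝ :=
  min (max (h * a - 1 / c) 0) m

section WaterFill

variable {h a c m x : ℝ}

theorem waterFill_nonneg (hm : 0 ≤ m) : 0 ≤ waterFill h a c m :=
  le_min (le_max_right _ _) hm

theorem waterFill_eq_zero_of_nonpos (hh : h ≤ 0) (ha : 0 ≤ a) (hc : 0 < c) (hm : 0 ≤ m) :
    waterFill h a c m = 0 := by
  have hpeak : h * a - 1 / c ≤ 0 := by
    nlinarith [mul_nonpos_of_nonpos_of_nonneg hh ha, one_div_pos.mpr hc]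
  rw [waterFill, max_eq_right hpeak, min_eq_left hm]

theorem marginal_mul_sub_waterFill_le (hc : 0 < c) (hh : 0 < h)
    (hx0 : 0 ≤ x) (hxm : x ≤ m) :
    a * c / (1 + c * waterFill h a c m) * (x - waterFill h a c m) ≤
      (x - waterFill h a c m) / h := by
  have hcinv : c * (1 / c) = 1 := mul_one_div_cancel hc.ne'
  rcases le_total (h * a - 1 / c) 0 with hlow | hpos
  · have hs : waterFill h a c m = 0 := by
      rw [waterFill, max_eq_right hlow, min_eq_left (hx0.trans hxm)]
    rw [hs, mul_zero, add_zero, div_one, sub_zero, le_div_iff₀ hh]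
    nlinarith [mul_le_mul_of_nonneg_left hlow hc.le]
  rcases le_total m (h * a - 1 / c) with hcap | hmid
  · have hs : waterFill h a c m = m := by
      rw [waterFill, max_eq_left hpos, min_eq_right hcap]
    have hden : 0 < 1 + c * m := by nlinarith
    rw [hs, div_mul_eq_mul_div, div_le_div_iff₀ hden hh]
    nlinarith [mul_le_mul_of_nonneg_left hcap hc.le]
  · have hs : waterFill h a c m = h * a - 1 / c := by
      rw [waterFill, max_eq_left hpos, min_eq_left hmid]
    have hden : 1 + c * (h * a - 1 / c) = h * a * c := by linear_combination -hcinv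
    have hmarginal : a * c / (h * a * c) = 1 / h := by
      have hac : a * c ≠ 0 := by
        intro h0
        nlinarith [mul_le_mul_of_nonneg_left hpos hc.le]
      rw [mul_assoc, div_mul_cancel_right₀ hac, one_div]
    rw [hs, hden, hmarginal, one_div_mul_eq_div]

theorem lagrangian_le_waterFill (ha : 0 ≤ a) (hc : 0 < c) (hh : 0 < h)
    (hx0 : 0 ≤ x) (hxm : x ≤ m) :
    a * log (1 + c * x) - 1 / h * x ≤
      a * log (1 + c * waterFill h a c m) - 1 / h * waterFill h a c m := by
  have hs0 := waterFill_nonneg (a := a) (c := c) (h := h) (hx0.trans hxm)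
  have htangent := log_one_add_mul_le_tangent (c := c) (y := x)
    (by positivity : 0 < 1 + c * waterFill h a c m) (by positivity)
  have hmarginal := marginal_mul_sub_waterFill_le (a := a) hc hh hx0 hxm
  calc a * log (1 + c * x) - 1 / h * x
      ≤ a * (log (1 + c * waterFill h a c m) +
          c / (1 + c * waterFill h a c m) * (x - waterFill h a c m)) - 1 / h * x := by
        gcongr
    _ = a * log (1 + c * waterFill h a c m) - 1 / h * waterFill h a c m +
          (a * c / (1 + c * waterFill h a c m) * (x - waterFill h a c m) -
            (x - waterFill h a c m) / h) := by ring
    _ ≤ _ := by linarith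

end WaterFill

theorem trpm_waterfilling_optimal_general
    {K : Type*} [Fintype K]
    (a b l m : K → ℝ) (E : ℝ) (h : ℝ)
    (ha : ∀ k, 0 < a k) (hb : ∀ k, 0 < b k) (hl : ∀ k, 0 < l k)
    (hE : 0 < E)
    (pstar : K → ℝ)
    (hpstar : ∀ k, pstar k = min (max (h * a k - 1 / (b k * l k)) 0) (m k))
    (hsum : ∑ k, pstar k = E) :
    ∀ p : K → ℝ, (∀ k, 0 ≤ p k) → (∀ k, p k ≤ m k) → (∑ k, p k ≤ E) →
      ∑ k, a k * Real.log (1 + b k * l k * p k) ≤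
        ∑ k, a k * Real.log (1 + b k * l k * pstar k) := by
  intro p hp0 hpm hpE
  have hgain k : 0 < b k * l k := mul_pos (hb k) (hl k)
  have hh : 0 < h := by
    by_contra! hh
    have hzero k : pstar k = 0 :=
      (hpstar k).trans <| waterFill_eq_zero_of_nonpos hh (ha k).le (hgain k) ((hp0 k).trans (hpm k))
    simp only [hzero, sum_const_zero] at hsum
    linarith
  refine sum_le_sum_of_lagrangian_le (f := fun k t => a k * log (1 + b k * l k * t))
    (one_div_pos.mpr hh).le (hpE.trans_eq hsum.symm) fun k _ => ?_
  rw [hpstar k]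
  exact lagrangian_le_waterFill (ha k).le (hgain k) hh (hp0 k) (hpm k)

/-- Water-filling optimality for the TRPM problem. -/
theorem trpm_waterfilling_optimal
    {K : Type*} [Fintype K] [Nonempty K]
    (a b l m : K → ℝ) (E : ℝ) (h : ℝ)
    (ha : ∀ k, 0 < a k) (hb : ∀ k, 0 < b k) (hl : ∀ k, 0 < l k)
    (hm : ∀ k, 0 < m k) (hE : 0 < E)
    (pstar : K → ℝ)
    (hpstar : ∀ k, pstar k = min (max (h * a k - 1 / (b k * l k)) 0) (m k))
    (hsum : ∑ k, pstar k = E) :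
    ∀ p : K → ℝ, (∀ k, 0 ≤ p k) → (∀ k, p k ≤ m k) → (∑ k, p k ≤ E) →
      ∑ k, a k * Real.log (1 + b k * l k * p k) ≤
        ∑ k, a k * Real.log (1 + b k * l k * pstar k) :=
  trpm_waterfilling_optimal_general a b l m E h ha hb hl hE pstar hpstar hsum
end

section
/- Max-min optimality of the equalizing CRPM allocation: Let K be a finite nonempty index set with parameters a_k > 0, b_k > 0, λ_k > 0, U_k ∈ ℝ for each k ∈ K, and budget E_c > 0. Suppose α ∈ ℝ satisfies ∑_{k∈K} (1/(b_k·λ_k))·(exp((α − U_k)/a_k) − 1) = E_c. Then for every allocation q : K → ℝ with q_k ≥ 0 for all k and ∑_{k∈K} q_k ≤ E_c, one has min_{k∈K} (U_k + a_k·log(1 + b_k·λ_k·q_k)) ≤ α. -/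
open Finset Real

/-- Max-min optimality of the equalizing CRPM allocation. -/
theorem crpm_maxmin_optimal
    {K : Type*} [Fintype K] [Nonempty K]
    (a b l U : K → ℝ) (Ec : ℝ) (α : ℝ)
    (ha : ∀ k, 0 < a k) (hb : ∀ k, 0 < b k) (hl : ∀ k, 0 < l k)
    (hEc : 0 < Ec)
    (hsum : ∑ k, (1 / (b k * l k)) * (Real.exp ((α - U k) / a k) - 1) = Ec) :
    ∀ q : K → ℝ, (∀ k, 0 ≤ q k) → (∑ k, q k ≤ Ec) →
      Finset.univ.inf' Finset.univ_nonempty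
        (fun k => U k + a k * Real.log (1 + b k * l k * q k)) ≤ α := by
  intro q hq hqsum
  by_contra h
  push_neg at h
  have key : ∀ k : K, (1 / (b k * l k)) * (Real.exp ((α - U k) / a k) - 1) < q k := by
    intro k
    have hk : α < U k + a k * Real.log (1 + b k * l k * q k) :=
      lt_of_lt_of_le h (Finset.inf'_le _ (Finset.mem_univ k))
    have hpos : 0 < 1 + b k * l k * q k := by
      have : 0 ≤ b k * l k * q k :=
        mul_nonneg (mul_pos (hb k) (hl k)).le (hq k)
      linarith
    have hdiv : (α - U k) / a k < Real.log (1 + b k * l k * q k) := by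
      rw [div_lt_iff₀ (ha k)]
      linarith [mul_comm (a k) (Real.log (1 + b k * l k * q k))]
    have hexp : Real.exp ((α - U k) / a k) < 1 + b k * l k * q k := by
      calc Real.exp ((α - U k) / a k) < Real.exp (Real.log (1 + b k * l k * q k)) :=
            Real.exp_lt_exp.mpr hdiv
        _ = 1 + b k * l k * q k := Real.exp_log hpos
    have hbl : 0 < b k * l k := mul_pos (hb k) (hl k)
    rw [div_mul_eq_mul_div, one_mul, div_lt_iff₀ hbl]
    nlinarith
  have hlt : (∑ k, (1 / (b k * l k)) * (Real.exp ((α - U k) / a k) - 1)) < ∑ k, q k :=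
    Finset.sum_lt_sum_of_nonempty Finset.univ_nonempty (fun k _ => key k)
  rw [hsum] at hlt
  linarith
end
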